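/- Let T > 0, d ≥ 2, E = [0,T]×ℝ^d×ℝ^d×S^{d−1}, let w be a finite Borel measure on E, and let (μ_t)_{t∈[0,T]} be a family of Borel probability measures on ℝ^d with sup_{t≤T} ∫|v|² dμ_t < ∞ which is càdlàg with respect to the bounded-Lipschitz metric W. Suppose (μ_•, w) satisfies the continuity equation (CE). Then for every f ∈ C^{1,1}_{0,b}([0,T]×ℝ^d) and every t ∈ [0,T], ∫ f(t,·) dμ_t = ∫₀^t (∫ ∂_s f(s,·) dμ_s) ds + ∫_E 1[s ≤ t] Δf(s, v, v⋆, σ) w(ds,dv,dv⋆,dσ), where Δf(s,v,v⋆,σ) = f(s,v') + f(s,v⋆') − f(s,v) − f(s,v⋆). -/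

import Mathlib

open MeasureTheory Filter Set
open scoped RealInnerProductSpace ENNReal Topology NNReal

/-- Post-collisional velocity `v' = v − ((v−v⋆)·σ)σ`. -/
noncomputable def vPost (d : ℕ) (v vs σ : EuclideanSpace ℝ (Fin d)) :
    EuclideanSpace ℝ (Fin d) := v - ⟪v - vs, σ⟫ • σ

/-- Post-collisional velocity `v⋆' = v⋆ + ((v−v⋆)·σ)σ`. -/
noncomputable def vsPost (d : ℕ) (v vs σ : EuclideanSpace ℝ (Fin d)) :
    EuclideanSpace ℝ (Fin d) := vs + ⟪v - vs, σ⟫ • σ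

/-- The collision parameter space `E = [0,T] × ℝ^d × ℝ^d × S^{d−1}`. -/
abbrev CollisionSpace (d : ℕ) (T : ℝ) :=
  ↥(Set.Icc (0 : ℝ) T) × EuclideanSpace ℝ (Fin d) × EuclideanSpace ℝ (Fin d) ×
    ↥(Metric.sphere (0 : EuclideanSpace ℝ (Fin d)) 1)

/-- The bounded-Lipschitz metric
`W(μ,ν) = sup{∫ f dμ − ∫ f dν : ‖f‖_∞ ≤ 1, Lip(f) ≤ 1}`. -/
noncomputable def blDist (d : ℕ) (μ ν : Measure (EuclideanSpace ℝ (Fin d))) : ℝ :=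
  ⨆ f : {f : EuclideanSpace ℝ (Fin d) → ℝ // (∀ x, |f x| ≤ 1) ∧ LipschitzWith 1 f},
    (∫ x, f.1 x ∂μ) - ∫ x, f.1 x ∂ν

/-- A measure-valued path which is càdlàg with respect to the bounded-Lipschitz metric
`W` on `[0,T]`: right-continuous in `W`, with left limits in `W`. -/
def CadlagW (d : ℕ) (T : ℝ) (μ : ℝ → Measure (EuclideanSpace ℝ (Fin d))) : Prop :=
  (∀ t ∈ Set.Ico (0 : ℝ) T,
    Tendsto (fun s => blDist d (μ s) (μ t)) (nhdsWithin t (Set.Ioc t T)) (𝓝 0)) ∧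
  (∀ t ∈ Set.Ioc (0 : ℝ) T, ∃ ν : Measure (EuclideanSpace ℝ (Fin d)),
    Tendsto (fun s => blDist d (μ s) ν) (nhdsWithin t (Set.Ico 0 t)) (𝓝 0))

/-- The continuity equation (CE): for every `t ∈ [0,T]` and every bounded Lipschitz
`g : ℝ^d → ℝ`, `∫ g dμ_t = ∫ g dμ_0 + ∫_E 1[s ≤ t] Δg(v,v⋆,σ) dw`. -/
def ContinuityEq (d : ℕ) (T : ℝ) (μ : ℝ → Measure (EuclideanSpace ℝ (Fin d)))
    (w : Measure (CollisionSpace d T)) : Prop :=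
  ∀ t ∈ Set.Icc (0 : ℝ) T, ∀ g : EuclideanSpace ℝ (Fin d) → ℝ,
    (∃ C, ∀ x, |g x| ≤ C) → (∃ L : ℝ≥0, LipschitzWith L g) →
    ∫ v, g v ∂(μ t) = (∫ v, g v ∂(μ 0)) +
      ∫ p : CollisionSpace d T,
        (if (p.1 : ℝ) ≤ t then
          g (vPost d p.2.1 p.2.2.1 (p.2.2.2 : EuclideanSpace ℝ (Fin d)))
            + g (vsPost d p.2.1 p.2.2.1 (p.2.2.2 : EuclideanSpace ℝ (Fin d)))
            - g p.2.1 - g p.2.2.1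
         else 0) ∂w

/-- Membership in the class `C^{1,1}_{0,b}([0,T]×ℝ^d)`, for a function `f` together with
its time derivative `fdot`: `f(0,·) ≡ 0`; `f` bounded and uniformly Lipschitz in the
velocity variable; the time derivative exists on `[0,T]` and is bounded and uniformly
Lipschitz in the velocity variable. -/
def MemC11 (d : ℕ) (T : ℝ) (f fdot : ℝ → EuclideanSpace ℝ (Fin d) → ℝ) : Prop :=
  (∀ v, f 0 v = 0) ∧
  (∃ C, ∀ t ∈ Set.Icc (0 : ℝ) T, ∀ v, |f t v| ≤ C) ∧
  (∃ L : ℝ≥0, ∀ t ∈ Set.Icc (0 : ℝ) T, LipschitzWith L (f t)) ∧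
  (∀ v, ∀ t ∈ Set.Icc (0 : ℝ) T,
    HasDerivWithinAt (fun s => f s v) (fdot t v) (Set.Icc (0 : ℝ) T) t) ∧
  (∃ C, ∀ t ∈ Set.Icc (0 : ℝ) T, ∀ v, |fdot t v| ≤ C) ∧
  (∃ L : ℝ≥0, ∀ t ∈ Set.Icc (0 : ℝ) T, LipschitzWith L (fdot t))

/-!
Writing `f(t, v) = ∫₀ᵗ ∂ₛf(s, v) ds`, integrating against `μ_t` and swapping the integrals gives
`∫ f(t) dμ_t = ∫₀ᵗ ∫ ∂ₛf(s) dμ_t ds`. For fixed `s`, (CE) between the times `s` and `t`, applied to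
`g = ∂ₛf(s, ·)`, replaces `∫ ∂ₛf(s) dμ_t` by `∫ ∂ₛf(s) dμ_s` plus the collisions with time in
`(s, t]`. Integrating that collision term over `s` and swapping once more, a collision at time
`r ≤ t` collects `∫₀ʳ Δ(∂ₛf(s)) ds = Δf(r)`, because `f(0, ·) = 0`.
-/

section DerivIndicator

variable {F : Type*} [NormedAddCommGroup F] [NormedSpace ℝ F] {φ φ' : ℝ → F} {a b : ℝ}

theorem hasDerivWithinAt_Ici_of_hasDerivWithinAt_Icc
    (h : ∀ s ∈ Icc a b, HasDerivWithinAt φ (φ' s) (Icc a b) s) {s : ℝ} (hs : s ∈ Ico a b) :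
    HasDerivWithinAt φ (φ' s) (Ici s) s := by
  refine (h s (Ico_subset_Icc_self hs)).mono_of_mem_nhdsWithin ?_
  filter_upwards [nhdsWithin_le_nhds (Iic_mem_nhds hs.2), self_mem_nhdsWithin] with x hxb hxs
  exact ⟨hs.1.trans hxs, hxb⟩

variable [CompleteSpace F]

theorem stronglyMeasurable_indicator_Ico_of_hasDerivWithinAt
    (h : ∀ s ∈ Icc a b, HasDerivWithinAt φ (φ' s) (Icc a b) s) :
    StronglyMeasurable ((Ico a b).indicator φ') := by
  have : (Ico a b).indicator φ' = (Ico a b).indicator (fun s => derivWithin φ (Ici s) s) :=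
    indicator_congr fun s hs =>
      ((hasDerivWithinAt_Ici_of_hasDerivWithinAt_Icc h hs).derivWithin
        (uniqueDiffOn_Ici s s self_mem_Ici)).symm
  rw [this]
  exact (stronglyMeasurable_derivWithin_Ici φ).indicator measurableSet_Ico

theorem setIntegral_Ioc_indicator_Ico_eq_sub
    (h : ∀ s ∈ Icc a b, HasDerivWithinAt φ (φ' s) (Icc a b) s) {C : ℝ}
    (hC : ∀ s ∈ Icc a b, ‖φ' s‖ ≤ C) {u : ℝ} (hu : u ∈ Icc a b) :
    ∫ s in Ioc a u, (Ico a b).indicator φ' s = φ u - φ a := by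
  rw [← intervalIntegral.integral_of_le hu.1]
  refine intervalIntegral.integral_eq_sub_of_hasDeriv_right_of_le hu.1
    (fun s hs => (h s ⟨hs.1, hs.2.trans hu.2⟩).continuousWithinAt.mono
      (Icc_subset_Icc_right hu.2)) (fun s hs => ?_) ?_
  · have hs' : s ∈ Ico a b := ⟨hs.1.le, hs.2.trans_le hu.2⟩
    rw [indicator_of_mem hs']
    exact (hasDerivWithinAt_Ici_of_hasDerivWithinAt_Icc h hs').mono Ioi_subset_Ici_self
  · rw [intervalIntegrable_iff_integrableOn_Icc_of_le hu.1]
    refine IntegrableOn.of_bound measure_Icc_lt_top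
      (stronglyMeasurable_indicator_Ico_of_hasDerivWithinAt h).aestronglyMeasurable (max C 0)
      (Eventually.of_forall fun s => ?_)
    by_cases hs : s ∈ Ico a b
    · rw [indicator_of_mem hs]
      exact le_max_of_le_left (hC s (Ico_subset_Icc_self hs))
    · simp [indicator_of_notMem hs]

end DerivIndicator

section Collision

variable {d : ℕ} {T : ℝ}

@[fun_prop]
theorem Continuous.vPost {α : Type*} [TopologicalSpace α] {v vs σ : α → EuclideanSpace ℝ (Fin d)}
    (hv : Continuous v) (hvs : Continuous vs) (hσ : Continuous σ) :
    Continuous fun x => vPost d (v x) (vs x) (σ x) := by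
  unfold _root_.vPost; fun_prop

@[fun_prop]
theorem Continuous.vsPost {α : Type*} [TopologicalSpace α] {v vs σ : α → EuclideanSpace ℝ (Fin d)}
    (hv : Continuous v) (hvs : Continuous vs) (hσ : Continuous σ) :
    Continuous fun x => vsPost d (v x) (vs x) (σ x) := by
  unfold _root_.vsPost; fun_prop

noncomputable def collDelta (g : EuclideanSpace ℝ (Fin d) → ℝ) (p : CollisionSpace d T) : ℝ :=
  g (vPost d p.2.1 p.2.2.1 (p.2.2.2 : EuclideanSpace ℝ (Fin d)))
    + g (vsPost d p.2.1 p.2.2.1 (p.2.2.2 : EuclideanSpace ℝ (Fin d)))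
    - g p.2.1 - g p.2.2.1

theorem norm_ite_collDelta_le {g : EuclideanSpace ℝ (Fin d) → ℝ} {C : ℝ} (hC : ∀ x, |g x| ≤ C)
    (P : Prop) [Decidable P] (p : CollisionSpace d T) :
    ‖if P then collDelta g p else 0‖ ≤ 4 * C := by
  have hC0 : 0 ≤ C := (abs_nonneg _).trans (hC 0)
  split_ifs
  · rw [Real.norm_eq_abs, collDelta]
    have := hC (vPost d p.2.1 p.2.2.1 p.2.2.2); have := hC (vsPost d p.2.1 p.2.2.1 p.2.2.2)
    have := hC p.2.1; have := hC p.2.2.1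
    rw [abs_le] at *
    constructor <;> linarith
  · simpa using hC0

theorem measurable_collDelta_uncurry {α : Type*} [MeasurableSpace α]
    {G : α → EuclideanSpace ℝ (Fin d) → ℝ} (hG : Measurable (Function.uncurry G)) :
    Measurable fun q : α × CollisionSpace d T => collDelta (G q.1) q.2 := by
  have hG' : Measurable fun x : α × EuclideanSpace ℝ (Fin d) => G x.1 x.2 := hG
  unfold collDelta
  fun_prop

theorem integral_collDelta {α : Type*} [MeasurableSpace α] {ν : Measure α}
    {F : α → EuclideanSpace ℝ (Fin d) → ℝ} (hF : ∀ v, Integrable (fun a => F a v) ν)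
    (p : CollisionSpace d T) :
    ∫ a, collDelta (F a) p ∂ν = collDelta (fun v => ∫ a, F a v ∂ν) p := by
  unfold collDelta
  rw [integral_sub, integral_sub, integral_add] <;> fun_prop

variable {w : Measure (CollisionSpace d T)} [IsFiniteMeasure w]

theorem integrable_ite_collDelta {g : EuclideanSpace ℝ (Fin d) → ℝ} (hg : Measurable g)
    {C : ℝ} (hC : ∀ x, |g x| ≤ C) (t : ℝ) :
    Integrable (fun p : CollisionSpace d T => if (p.1 : ℝ) ≤ t then collDelta g p else 0) w := by
  have hmeas : Measurable (collDelta (T := T) g) := by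
    unfold collDelta; fun_prop
  have hr : Measurable fun p : CollisionSpace d T => (p.1 : ℝ) := by fun_prop
  exact .of_bound (Measurable.ite (hr measurableSet_Iic) hmeas
    measurable_const).aestronglyMeasurable _ (ae_of_all _ fun p => norm_ite_collDelta_le hC _ p)

theorem integrable_ite_collDelta_prod {G : ℝ → EuclideanSpace ℝ (Fin d) → ℝ}
    (hG : Measurable (Function.uncurry G)) {C : ℝ} (hC : ∀ s v, |G s v| ≤ C)
    (μ : Measure ℝ) [IsFiniteMeasure μ] (t : ℝ) :
    Integrable (fun q : ℝ × CollisionSpace d T =>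
      if (q.2.1 : ℝ) ∈ Ioc q.1 t then collDelta (G q.1) q.2 else 0) (μ.prod w) := by
  have hr : Measurable fun q : ℝ × CollisionSpace d T => (q.2.1 : ℝ) := by fun_prop
  have hS : MeasurableSet {q : ℝ × CollisionSpace d T | (q.2.1 : ℝ) ∈ Ioc q.1 t} :=
    (measurableSet_lt measurable_fst hr).inter (hr measurableSet_Iic)
  exact .of_bound (Measurable.ite hS (measurable_collDelta_uncurry hG)
    measurable_const).aestronglyMeasurable
    _ (ae_of_all _ fun q => norm_ite_collDelta_le (hC q.1) _ q.2)

end Collision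

section ContinuityEquation

variable {d : ℕ} {T : ℝ} {w : Measure (CollisionSpace d T)} [IsFiniteMeasure w]

theorem ContinuityEq.integral_sub_integral {μ : ℝ → Measure (EuclideanSpace ℝ (Fin d))}
    (hCE : ContinuityEq d T μ w) {s t : ℝ} (hs : s ∈ Icc 0 T) (ht : t ∈ Icc 0 T) (hst : s ≤ t)
    {g : EuclideanSpace ℝ (Fin d) → ℝ} {C : ℝ} (hC : ∀ x, |g x| ≤ C) {L : ℝ≥0}
    (hg : LipschitzWith L g) :
    ∫ v, g v ∂μ t - ∫ v, g v ∂μ s =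
      ∫ p, (if (p.1 : ℝ) ∈ Ioc s t then collDelta g p else 0) ∂w := by
  rw [hCE t ht g ⟨C, hC⟩ ⟨L, hg⟩, hCE s hs g ⟨C, hC⟩ ⟨L, hg⟩, add_sub_add_left_eq_sub]
  refine (integral_sub (integrable_ite_collDelta hg.continuous.measurable hC t)
    (integrable_ite_collDelta hg.continuous.measurable hC s)).symm.trans
      (integral_congr_ae (ae_of_all _ fun p => ?_))
  by_cases hps : (p.1 : ℝ) ≤ s
  · simp [collDelta, hps, hps.trans hst, not_lt.2 hps]
  · by_cases hpt : (p.1 : ℝ) ≤ t <;> simp [collDelta, hps, hpt, lt_of_not_ge hps]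

theorem setIntegral_integral_ite_collDelta {G f : ℝ → EuclideanSpace ℝ (Fin d) → ℝ}
    (hG : Measurable (Function.uncurry G)) {C : ℝ} (hC : ∀ s v, |G s v| ≤ C)
    (hGf : ∀ r ∈ Icc 0 T, ∀ v, ∫ s in Ioc 0 r, G s v = f r v) (t : ℝ) :
    ∫ s in Ioc 0 t, ∫ p, (if (p.1 : ℝ) ∈ Ioc s t then collDelta (G s) p else 0) ∂w =
      ∫ p, (if (p.1 : ℝ) ≤ t then collDelta (f p.1) p else 0) ∂w := by
  rw [integral_integral_swap (integrable_ite_collDelta_prod hG hC _ t)]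
  refine integral_congr_ae (ae_of_all _ fun p => ?_)
  by_cases hpt : (p.1 : ℝ) ≤ t
  · have hGint : ∀ v, Integrable (fun s => G s v) (volume.restrict (Ioo 0 (p.1 : ℝ))) :=
      fun v => .of_bound (hG.comp measurable_prodMk_right).aestronglyMeasurable C
        (ae_of_all _ fun s => hC s v)
    have hslice : Ioc 0 t ∩ Iio (p.1 : ℝ) = Ioo 0 (p.1 : ℝ) := by
      ext s
      simp only [mem_inter_iff, mem_Ioc, mem_Iio, mem_Ioo]
      constructor
      · rintro ⟨⟨h0, -⟩, hr⟩; exact ⟨h0, hr⟩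
      · rintro ⟨h0, hr⟩; exact ⟨⟨h0, hr.le.trans hpt⟩, hr⟩
    calc ∫ s in Ioc 0 t, (if (p.1 : ℝ) ∈ Ioc s t then collDelta (G s) p else 0)
        = ∫ s in Ioc 0 t, (Iio (p.1 : ℝ)).indicator (fun s => collDelta (G s) p) s := by
          congr 1; ext s; simp [indicator_apply, hpt]
      _ = ∫ s in Ioo 0 (p.1 : ℝ), collDelta (G s) p := by
          rw [setIntegral_indicator measurableSet_Iio, hslice]
      _ = collDelta (f p.1) p := by
          rw [integral_collDelta hGint, ← funext (hGf p.1 p.1.2)]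
          simp only [integral_Ioc_eq_integral_Ioo]
      _ = _ := (if_pos hpt).symm
  · simp [hpt]

end ContinuityEquation

section TimeDerivative

variable {d : ℕ} {T : ℝ} {f fdot : ℝ → EuclideanSpace ℝ (Fin d) → ℝ}

/-- On `[0, T)` the time derivative is a right derivative, hence measurable in time; at `T` it
is only a left one, so it is cut off there. -/
noncomputable def truncDeriv (T : ℝ) (fdot : ℝ → EuclideanSpace ℝ (Fin d) → ℝ) (s : ℝ)
    (v : EuclideanSpace ℝ (Fin d)) : ℝ :=
  (Ico 0 T).indicator (fdot · v) s

theorem truncDeriv_of_mem {s : ℝ} (hs : s ∈ Ico 0 T) : truncDeriv T fdot s = fdot s :=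
  funext fun _ => indicator_of_mem hs _

theorem truncDeriv_of_notMem {s : ℝ} (hs : s ∉ Ico 0 T) : truncDeriv T fdot s = 0 :=
  funext fun _ => indicator_of_notMem hs _

namespace MemC11

theorem exists_abs_truncDeriv_le (hf : MemC11 d T f fdot) :
    ∃ C, ∀ s v, |truncDeriv T fdot s v| ≤ C := by
  obtain ⟨-, -, -, -, ⟨C, hC⟩, -⟩ := hf
  refine ⟨max C 0, fun s v => ?_⟩
  by_cases hs : s ∈ Ico 0 T
  · rw [truncDeriv_of_mem hs]
    exact le_max_of_le_left (hC s (Ico_subset_Icc_self hs) v)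
  · simp [truncDeriv_of_notMem hs]

theorem stronglyMeasurable_truncDeriv (hf : MemC11 d T f fdot) :
    StronglyMeasurable (Function.uncurry (truncDeriv T fdot)) := by
  obtain ⟨-, -, -, hder, -, ⟨L, hL⟩⟩ := hf
  have hcont (s : ℝ) : Continuous (truncDeriv T fdot s) := by
    by_cases hs : s ∈ Ico 0 T
    · rw [truncDeriv_of_mem hs]
      exact (hL s (Ico_subset_Icc_self hs)).continuous
    · rw [truncDeriv_of_notMem hs]
      exact continuous_const
  exact (stronglyMeasurable_uncurry_of_continuous_of_stronglyMeasurable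
    (u := fun v s => truncDeriv T fdot s v) hcont
    fun v => stronglyMeasurable_indicator_Ico_of_hasDerivWithinAt (hder v)).comp_measurable
      measurable_swap

theorem setIntegral_truncDeriv (hf : MemC11 d T f fdot) {u : ℝ} (hu : u ∈ Icc 0 T)
    (v : EuclideanSpace ℝ (Fin d)) :
    ∫ s in Ioc 0 u, truncDeriv T fdot s v = f u v := by
  obtain ⟨hf0, -, -, hder, ⟨C, hC⟩, -⟩ := hf
  have := setIntegral_Ioc_indicator_Ico_eq_sub (hder v) (fun s hs => hC s hs v) hu
  rwa [hf0, sub_zero] at this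

theorem integral_eq_integral_truncDeriv_sub {w : Measure (CollisionSpace d T)} [IsFiniteMeasure w]
    {μ : ℝ → Measure (EuclideanSpace ℝ (Fin d))} (hf : MemC11 d T f fdot)
    (hCE : ContinuityEq d T μ w) {s t : ℝ} (hs : s ∈ Ico 0 T) (ht : t ∈ Icc 0 T) (hst : s ≤ t) :
    ∫ v, fdot s v ∂μ s = ∫ v, truncDeriv T fdot s v ∂μ t -
      ∫ p, (if (p.1 : ℝ) ∈ Ioc s t then collDelta (truncDeriv T fdot s) p else 0) ∂w := by
  obtain ⟨-, -, -, -, ⟨C, hC⟩, ⟨L, hL⟩⟩ := hf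
  rw [truncDeriv_of_mem hs, ← hCE.integral_sub_integral (Ico_subset_Icc_self hs) ht hst
    (hC s (Ico_subset_Icc_self hs)) (hL s (Ico_subset_Icc_self hs)), sub_sub_cancel]

end MemC11

end TimeDerivative

theorem continuity_equation_time_dependent_general (d : ℕ) (T : ℝ)
    (w : Measure (CollisionSpace d T)) [IsFiniteMeasure w]
    (μ : ℝ → Measure (EuclideanSpace ℝ (Fin d)))
    (hprob : ∀ t ∈ Set.Icc (0 : ℝ) T, IsProbabilityMeasure (μ t))
    (hCE : ContinuityEq d T μ w)
    (f fdot : ℝ → EuclideanSpace ℝ (Fin d) → ℝ) (hf : MemC11 d T f fdot)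
    (t : ℝ) (ht : t ∈ Set.Icc (0 : ℝ) T) :
    ∫ v, f t v ∂(μ t) =
      (∫ s in Set.Ioc (0 : ℝ) t, (∫ v, fdot s v ∂(μ s))) +
      ∫ p : CollisionSpace d T,
        (if (p.1 : ℝ) ≤ t then
          f (p.1 : ℝ) (vPost d p.2.1 p.2.2.1 (p.2.2.2 : EuclideanSpace ℝ (Fin d)))
            + f (p.1 : ℝ) (vsPost d p.2.1 p.2.2.1 (p.2.2.2 : EuclideanSpace ℝ (Fin d)))
            - f (p.1 : ℝ) p.2.1 - f (p.1 : ℝ) p.2.2.1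
         else 0) ∂w := by
  set G := truncDeriv T fdot
  set B : ℝ → ℝ := fun s => ∫ p, (if (p.1 : ℝ) ∈ Ioc s t then collDelta (G s) p else 0) ∂w
  obtain ⟨C, hC⟩ := hf.exists_abs_truncDeriv_le
  have hG := hf.stronglyMeasurable_truncDeriv
  have := hprob t ht
  have hGint : Integrable (Function.uncurry fun v s => G s v)
      ((μ t).prod (volume.restrict (Ioc 0 t))) :=
    .of_bound (hG.comp_measurable measurable_swap).aestronglyMeasurable C
      (ae_of_all _ fun q => hC q.2 q.1)
  have hμtint : IntegrableOn (fun s => ∫ v, G s v ∂μ t) (Ioc 0 t) := hGint.integral_prod_right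
  have hBint : IntegrableOn B (Ioc 0 t) :=
    (integrable_ite_collDelta_prod hG.measurable hC _ t).integral_prod_left
  have hCEs : ∀ s ∈ Ioo 0 t, ∫ v, G s v ∂μ t - B s = ∫ v, fdot s v ∂μ s := fun s hs =>
    (hf.integral_eq_integral_truncDeriv_sub hCE ⟨hs.1.le, hs.2.trans_le ht.2⟩ ht hs.2.le).symm
  calc ∫ v, f t v ∂μ t = ∫ v, (∫ s in Ioc 0 t, G s v) ∂μ t :=
        integral_congr_ae (ae_of_all _ fun v => (hf.setIntegral_truncDeriv ht v).symm)
    _ = ∫ s in Ioc 0 t, ∫ v, G s v ∂μ t := integral_integral_swap hGint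
    _ = (∫ s in Ioc 0 t, (∫ v, G s v ∂μ t - B s)) + ∫ s in Ioc 0 t, B s := by
      rw [integral_sub hμtint hBint, sub_add_cancel]
    _ = _ := by
      rw [integral_Ioc_eq_integral_Ioo (f := fun s => ∫ v, G s v ∂μ t - B s),
        setIntegral_congr_fun measurableSet_Ioo hCEs,
        ← integral_Ioc_eq_integral_Ioo (f := fun s => ∫ v, fdot s v ∂μ s),
        setIntegral_integral_ite_collDelta hG.measurable hC
          (fun r hr => hf.setIntegral_truncDeriv hr) t]
      rfl

/-- if `(μ_•, w)` satisfies the continuity equation, then for every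
`f ∈ C^{1,1}_{0,b}([0,T]×ℝ^d)` and `t ∈ [0,T]`,
`∫ f(t,·) dμ_t = ∫₀^t ∫ ∂_s f(s,·) dμ_s ds + ∫_E 1[s≤t] Δf(s,v,v⋆,σ) dw`. -/
theorem continuity_equation_time_dependent (d : ℕ) (hd : 2 ≤ d) (T : ℝ) (hT : 0 < T)
    (w : Measure (CollisionSpace d T)) [IsFiniteMeasure w]
    (μ : ℝ → Measure (EuclideanSpace ℝ (Fin d)))
    (hprob : ∀ t ∈ Set.Icc (0 : ℝ) T, IsProbabilityMeasure (μ t))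
    (hmom : ∃ C : ℝ≥0∞, C < ⊤ ∧ ∀ t ∈ Set.Icc (0 : ℝ) T,
      ∫⁻ v, ENNReal.ofReal (‖v‖ ^ 2) ∂(μ t) ≤ C)
    (hcadlag : CadlagW d T μ)
    (hCE : ContinuityEq d T μ w)
    (f fdot : ℝ → EuclideanSpace ℝ (Fin d) → ℝ) (hf : MemC11 d T f fdot)
    (t : ℝ) (ht : t ∈ Set.Icc (0 : ℝ) T) :
    ∫ v, f t v ∂(μ t) =
      (∫ s in Set.Ioc (0 : ℝ) t, (∫ v, fdot s v ∂(μ s))) +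
      ∫ p : CollisionSpace d T,
        (if (p.1 : ℝ) ≤ t then
          f (p.1 : ℝ) (vPost d p.2.1 p.2.2.1 (p.2.2.2 : EuclideanSpace ℝ (Fin d)))
            + f (p.1 : ℝ) (vsPost d p.2.1 p.2.2.1 (p.2.2.2 : EuclideanSpace ℝ (Fin d)))
            - f (p.1 : ℝ) p.2.1 - f (p.1 : ℝ) p.2.2.1
         else 0) ∂w :=
  continuity_equation_time_dependent_general d T w μ hprob hCE f fdot hf t ht
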